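/- Let {W_i}_{i=1}^M be subspaces of a finite-dimensional real inner product space H such that {W_i}_{i=1}^M does phase retrieval. Then the family of orthogonal complements {W_i^⊥}_{i=1}^M does phase retrieval if and only if {W_i^⊥}_{i=1}^M does norm retrieval. -/

import Mathlib

open scoped RealInnerProductSpace

noncomputable section

/-- Phase retrieval for a family of subspaces of a finite-dimensional real inner product
space. -/
def DoesPhaseRetrieval {H : Type*} [NormedAddCommGroup H] [InnerProductSpace ℝ H]
    [FiniteDimensional ℝ H] {ι : Type*} (W : ι → Submodule ℝ H) : Prop :=
  ∀ x y : H, (∀ i : ι, ‖Submodule.orthogonalProjectionOnto (W i) x‖ = ‖Submodule.orthogonalProjectionOnto (W i) y‖) →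
    x = y ∨ x = -y

/-- Norm retrieval for a family of subspaces of a finite-dimensional real inner product
space. -/
def DoesNormRetrieval {H : Type*} [NormedAddCommGroup H] [InnerProductSpace ℝ H]
    [FiniteDimensional ℝ H] {ι : Type*} (W : ι → Submodule ℝ H) : Prop :=
  ∀ x y : H, (∀ i : ι, ‖Submodule.orthogonalProjectionOnto (W i) x‖ = ‖Submodule.orthogonalProjectionOnto (W i) y‖) →
    ‖x‖ = ‖y‖

/-!
Phase retrieval trivially gives norm retrieval. Conversely, by Pythagoras
`‖x‖² = ‖P_{W_i} x‖² + ‖P_{W_iᗮ} x‖²`, so once `{W_iᗮ}` recovers `‖x‖`, the norms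
`‖P_{W_iᗮ} x‖` determine the norms `‖P_{W_i} x‖`, and phase retrieval by `{W_i}` finishes.
-/

theorem Submodule.norm_orthogonalProjectionOnto_eq_of_orthogonal {𝕜 E : Type*} [RCLike 𝕜]
    [NormedAddCommGroup E] [InnerProductSpace 𝕜 E] (K : Submodule 𝕜 E)
    [K.HasOrthogonalProjection] {x y : E} (hxy : ‖x‖ = ‖y‖)
    (hK : ‖Kᗮ.orthogonalProjectionOnto x‖ = ‖Kᗮ.orthogonalProjectionOnto y‖) :
    ‖K.orthogonalProjectionOnto x‖ = ‖K.orthogonalProjectionOnto y‖ := by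
  have hx := K.norm_sq_eq_add_norm_sq_projection x
  have hy := K.norm_sq_eq_add_norm_sq_projection y
  have hsq : ‖K.orthogonalProjectionOnto x‖ ^ 2 = ‖K.orthogonalProjectionOnto y‖ ^ 2 := by
    rw [hxy, hK] at hx
    linarith
  exact (sq_eq_sq₀ (norm_nonneg _) (norm_nonneg _)).mp hsq

section

variable {H : Type*} [NormedAddCommGroup H] [InnerProductSpace ℝ H] [FiniteDimensional ℝ H]
  {ι : Type*} {W : ι → Submodule ℝ H}

theorem DoesPhaseRetrieval.doesNormRetrieval (h : DoesPhaseRetrieval W) :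
    DoesNormRetrieval W := by
  intro x y hxy
  rcases h x y hxy with rfl | rfl
  · rfl
  · exact norm_neg _

theorem DoesPhaseRetrieval.orthogonal_of_doesNormRetrieval (hW : DoesPhaseRetrieval W)
    (h : DoesNormRetrieval fun i => (W i)ᗮ) : DoesPhaseRetrieval fun i => (W i)ᗮ :=
  fun x y hxy => hW x y fun i =>
    (W i).norm_orthogonalProjectionOnto_eq_of_orthogonal (h x y hxy) (hxy i)

end

/-- If `{W_i}_{i=1}^M` does phase retrieval, then `{W_i^⊥}_{i=1}^M` does phase retrieval
if and only if `{W_i^⊥}_{i=1}^M` does norm retrieval. -/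
theorem stmt_11 {H : Type*} [NormedAddCommGroup H] [InnerProductSpace ℝ H]
    [FiniteDimensional ℝ H] {M : ℕ}
    (W : Fin M → Submodule ℝ H) (hW : DoesPhaseRetrieval W) :
    DoesPhaseRetrieval (fun i => (W i)ᗮ) ↔ DoesNormRetrieval (fun i => (W i)ᗮ) :=
  ⟨DoesPhaseRetrieval.doesNormRetrieval, hW.orthogonal_of_doesNormRetrieval⟩
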